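/- arXiv:2004.09399 — 3 statements merged into one kernel-verified Lean document; each statement's English description precedes it below -/
import Mathlib

section
/- Let P(τ) = Σ_{k=0}^N c_k τ^k/k! be a complex polynomial of degree at most N ≥ 2 whose real part is bounded above on ℝ; write P = log A + 2πi·φ with real polynomials, set f(τ) = exp(P(τ)), and let g : ℝ → ℂ be a Schwartz function. Fix t ∈ ℝ and an open set U ⊆ ℝ on which V_f^g(t,·) does not vanish; define x_{k,1}(η) = V_f^{t^{k−1}g}(t,η)/V_f^g(t,η), y₁(η) = ω̃_f(t,η), and assume recursively for j = 2, …, N that ∂_η x_{j,j−1} ≠ 0 on U, with x_{k,j} = ∂_η x_{k,j−1}/∂_η x_{j,j−1} and y_j = ∂_η y_{j−1}/∂_η x_{j,j−1}; set q̃^{[N,N]} = y_N and q̃^{[j,N]} = y_j − Σ_{k=j+1}^N x_{k,j}·q̃^{[k,N]} for j = N−1, …, 2. Then the N-th order complex instantaneous-frequency estimate ω̃^{[N]}_{η,f}(t,η) = ω̃_f(t,η) − Σ_{k=2}^N q̃^{[k,N]}(η)·x_{k,1}(η) recovers the instantaneous frequency exactly: for every η ∈ U, φ'(t) = Re(ω̃^{[N]}_{η,f}(t,η)).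 -/
open MeasureTheory Real

/-- The (modified) short-time Fourier transform of `f` with window `g`. -/
noncomputable def STFT (f g : ℝ → ℂ) (t η : ℝ) : ℂ :=
  ∫ τ : ℝ, f (t + τ) * (starRingEnd ℂ) (g τ) *
    Complex.exp (-2 * (π : ℂ) * Complex.I * (η : ℂ) * (τ : ℂ))

section Aux

open Polynomial Complex

lemma norm_twist (η a : ℝ) : ‖Complex.exp (-2 * (π : ℂ) * Complex.I * η * a)‖ = 1 := by
  rw [Complex.norm_exp]
  have : (-2 * (π : ℂ) * Complex.I * η * a).re = 0 := by
    simp [Complex.mul_re, Complex.mul_im]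
  rw [this, Real.exp_zero]

lemma integrable_pow_abs_mul (g : SchwartzMap ℝ ℂ) (k : ℕ) :
    Integrable (fun τ : ℝ => |τ| ^ k * ‖g τ‖) := by
  simpa [Real.norm_eq_abs] using g.integrable_pow_mul volume k

lemma integrable_shiftpow_mul (g : SchwartzMap ℝ ℂ) (c : ℝ) (i : ℕ) :
    Integrable (fun τ : ℝ => (c + |τ|) ^ i * ‖g τ‖) := by
  have h : ∀ τ : ℝ, (c + |τ|) ^ i * ‖g τ‖
      = ∑ j ∈ Finset.range (i + 1), (c ^ j * (i.choose j : ℝ)) * (|τ| ^ (i - j) * ‖g τ‖) := by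
    intro τ
    rw [add_pow, Finset.sum_mul]
    exact Finset.sum_congr rfl fun j _ => by ring
  simp_rw [h]
  exact integrable_finset_sum _ fun j _ => (integrable_pow_abs_mul g (i - j)).const_mul _

lemma cont_integrand (P : Polynomial ℂ) (g : SchwartzMap ℝ ℂ) (η s : ℝ) :
    Continuous (fun τ : ℝ => Complex.exp (P.eval ((s : ℂ) + τ)) * (starRingEnd ℂ) (g τ) *
      Complex.exp (-2 * (π : ℂ) * Complex.I * η * τ)) := by
  refine ((Complex.continuous_exp.comp (P.continuous.comp
    (continuous_const.add Complex.continuous_ofReal))).mul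
    (continuous_star.comp g.continuous)).mul
    (Complex.continuous_exp.comp (continuous_const.mul Complex.continuous_ofReal))

lemma norm_integrand (P : Polynomial ℂ) (g : SchwartzMap ℝ ℂ) (η s τ : ℝ) (k : ℕ) :
    ‖(τ : ℂ) ^ k * (Complex.exp (P.eval ((s : ℂ) + τ)) * (starRingEnd ℂ) (g τ) *
      Complex.exp (-2 * (π : ℂ) * Complex.I * η * τ))‖
    = |τ| ^ k * (Real.exp ((P.eval ((s : ℂ) + τ)).re) * ‖g τ‖) := by
  rw [norm_mul, norm_mul, norm_mul, norm_twist, mul_one, norm_pow]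
  simp [Complex.norm_exp]

lemma integrable_integrand (P : Polynomial ℂ) (M : ℝ) (hM : ∀ τ : ℝ, (P.eval (τ : ℂ)).re ≤ M)
    (g : SchwartzMap ℝ ℂ) (η s : ℝ) (k : ℕ) :
    Integrable (fun τ : ℝ => (τ : ℂ) ^ k * (Complex.exp (P.eval ((s : ℂ) + τ)) *
      (starRingEnd ℂ) (g τ) * Complex.exp (-2 * (π : ℂ) * Complex.I * η * τ))) := by
  refine Integrable.mono' ((integrable_pow_abs_mul g k).const_mul (Real.exp M))
    ((continuous_ofReal.pow k).mul (cont_integrand P g η s)).aestronglyMeasurable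
    (Filter.Eventually.of_forall fun τ => ?_)
  rw [norm_integrand]
  have h1 : (P.eval ((s : ℂ) + τ)).re ≤ M := by
    have := hM (s + τ); rwa [Complex.ofReal_add] at this
  have := Real.exp_le_exp.2 h1
  have hg : (0:ℝ) ≤ ‖g τ‖ := norm_nonneg _
  have ht : (0:ℝ) ≤ |τ| ^ k := by positivity
  calc |τ| ^ k * (Real.exp ((P.eval ((s : ℂ) + τ)).re) * ‖g τ‖)
      = Real.exp ((P.eval ((s : ℂ) + τ)).re) * (|τ| ^ k * ‖g τ‖) := by ring
    _ ≤ Real.exp M * (|τ| ^ k * ‖g τ‖) :=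
        mul_le_mul_of_nonneg_right this (mul_nonneg ht hg)

lemma polyeval_bound (Q : Polynomial ℂ) (R s τ : ℝ) (hs : |s| ≤ R) :
    ‖Q.eval ((s : ℂ) + τ)‖ ≤ ∑ i ∈ Finset.range (Q.natDegree + 1), ‖Q.coeff i‖ * (R + |τ|) ^ i := by
  rw [Polynomial.eval_eq_sum_range]
  refine (norm_sum_le _ _).trans (Finset.sum_le_sum fun i _ => ?_)
  rw [norm_mul, norm_pow]
  have hz : ‖(s : ℂ) + τ‖ ≤ R + |τ| := by
    rw [← Complex.ofReal_add, Complex.norm_real, Real.norm_eq_abs]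
    exact (abs_add_le s τ).trans (by gcongr)
  gcongr

lemma hasDerivAt_STFT_t (P : Polynomial ℂ) (M : ℝ) (hM : ∀ τ : ℝ, (P.eval (τ : ℂ)).re ≤ M)
    (g : SchwartzMap ℝ ℂ) (t η : ℝ) :
    HasDerivAt (fun t' : ℝ => STFT (fun τ : ℝ => Complex.exp (P.eval (τ : ℂ))) (⇑g) t' η)
      (∫ τ : ℝ, (Polynomial.derivative P).eval ((t : ℂ) + τ) *
        (Complex.exp (P.eval ((t : ℂ) + τ)) * (starRingEnd ℂ) (g τ) *
          Complex.exp (-2 * (π : ℂ) * Complex.I * η * τ))) t := by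
  set Q := Polynomial.derivative P with hQ
  set d := Q.natDegree
  set R : ℝ := |t| + 1 with hR
  have key := hasDerivAt_integral_of_dominated_loc_of_deriv_le (μ := volume) (x₀ := t)
    (F := fun (s : ℝ) (τ : ℝ) => Complex.exp (P.eval ((s : ℂ) + τ)) * (starRingEnd ℂ) (g τ) *
      Complex.exp (-2 * (π : ℂ) * Complex.I * η * τ))
    (F' := fun (s : ℝ) (τ : ℝ) => Q.eval ((s : ℂ) + τ) * (Complex.exp (P.eval ((s : ℂ) + τ)) *
      (starRingEnd ℂ) (g τ) * Complex.exp (-2 * (π : ℂ) * Complex.I * η * τ)))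
    (bound := fun τ => (∑ i ∈ Finset.range (d + 1), ‖Q.coeff i‖ * (R + |τ|) ^ i) *
      (Real.exp M * ‖g τ‖)) (Metric.ball_mem_nhds _ one_pos)
    (Filter.Eventually.of_forall fun s => (cont_integrand P g η s).aestronglyMeasurable)
    (by simpa using integrable_integrand P M hM g η t 0)
    (((Q.continuous.comp (continuous_const.add Complex.continuous_ofReal)).mul
      (cont_integrand P g η t)).aestronglyMeasurable)
    (Filter.Eventually.of_forall fun τ => fun s hs => ?_)
    (by
      have h : ∀ τ : ℝ, (∑ i ∈ Finset.range (d + 1), ‖Q.coeff i‖ * (R + |τ|) ^ i) *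
          (Real.exp M * ‖g τ‖)
          = ∑ i ∈ Finset.range (d + 1), (‖Q.coeff i‖ * Real.exp M) * ((R + |τ|) ^ i * ‖g τ‖) := by
        intro τ
        rw [Finset.sum_mul]
        exact Finset.sum_congr rfl fun i _ => by ring
      simp_rw [h]
      exact integrable_finset_sum _ fun i _ => (integrable_shiftpow_mul g R i).const_mul _)
    (Filter.Eventually.of_forall fun τ => fun s hs => ?_)
  · -- conclude
    have h2 := key.2
    have hfin : (fun s : ℝ => ∫ τ : ℝ, Complex.exp (P.eval ((s : ℂ) + τ)) *
        (starRingEnd ℂ) (g τ) * Complex.exp (-2 * (π : ℂ) * Complex.I * η * τ))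
        = fun s : ℝ => STFT (fun τ : ℝ => Complex.exp (P.eval (τ : ℂ))) (⇑g) s η := by
      funext s
      simp only [STFT, Complex.ofReal_add]
    rwa [hfin] at h2
  · -- bound
    have hnorm : ‖Q.eval ((s : ℂ) + τ) * (Complex.exp (P.eval ((s : ℂ) + τ)) *
        (starRingEnd ℂ) (g τ) * Complex.exp (-2 * (π : ℂ) * Complex.I * η * τ))‖
        = ‖Q.eval ((s : ℂ) + τ)‖ * (Real.exp ((P.eval ((s : ℂ) + τ)).re) * ‖g τ‖) := by
      rw [norm_mul, norm_mul, norm_mul, norm_twist, mul_one]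
      simp [Complex.norm_exp, mul_assoc]
    rw [hnorm]
    have hsR : |s| ≤ R := by
      rw [Metric.mem_ball, Real.dist_eq] at hs
      have : |s| ≤ |s - t| + |t| := by
        calc |s| = |s - t + t| := by ring_nf
          _ ≤ |s - t| + |t| := abs_add_le _ _
      linarith
    have h1 := polyeval_bound Q R s τ hsR
    have h2 : Real.exp ((P.eval ((s : ℂ) + τ)).re) * ‖g τ‖ ≤ Real.exp M * ‖g τ‖ := by
      have : (P.eval ((s : ℂ) + τ)).re ≤ M := by
        have := hM (s + τ); rwa [Complex.ofReal_add] at this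
      exact mul_le_mul_of_nonneg_right (Real.exp_le_exp.2 this) (norm_nonneg _)
    have h3 : (0:ℝ) ≤ Real.exp ((P.eval ((s : ℂ) + τ)).re) * ‖g τ‖ := by positivity
    have h4 : (0:ℝ) ≤ ∑ i ∈ Finset.range (d + 1), ‖Q.coeff i‖ * (R + |τ|) ^ i :=
      Finset.sum_nonneg fun i _ => by positivity
    exact mul_le_mul h1 h2 h3 h4
  · -- differentiability
    have hin : HasDerivAt (fun z : ℂ => P.eval (z + (τ : ℂ))) (Q.eval ((s : ℂ) + τ)) (s : ℂ) := by
      have h0 : HasDerivAt (fun z : ℂ => z + (τ : ℂ)) 1 (s : ℂ) :=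
        (hasDerivAt_id _).add_const _
      simpa [hQ, Function.comp_def] using (P.hasDerivAt ((s : ℂ) + τ)).comp (s : ℂ) h0
    have hexp := hin.cexp
    have hre := hexp.comp_ofReal (z := s)
    have hmul := hre.mul_const ((starRingEnd ℂ) (g τ) *
      Complex.exp (-2 * (π : ℂ) * Complex.I * η * τ))
    convert hmul using 1
    · rfl
    · funext s'
      simp [mul_assoc]
    · ring

lemma norm_neg_two_pi_I_tau (τ : ℝ) : ‖(-2 * (π : ℂ) * Complex.I * τ)‖ = 2 * π * |τ| := by
  simp [map_mul, Complex.norm_real, Complex.norm_I,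
    abs_of_pos Real.pi_pos]

lemma differentiableAt_STFT_eta (P : Polynomial ℂ) (M : ℝ)
    (hM : ∀ τ : ℝ, (P.eval (τ : ℂ)).re ≤ M)
    (g : SchwartzMap ℝ ℂ) (t : ℝ) (k : ℕ) (η : ℝ) :
    DifferentiableAt ℝ (fun η' : ℝ =>
      STFT (fun τ : ℝ => Complex.exp (P.eval (τ : ℂ))) (fun τ : ℝ => (τ : ℂ) ^ k * g τ) t η') η := by
  have key := hasDerivAt_integral_of_dominated_loc_of_deriv_le (μ := volume) (x₀ := η)
    (F := fun (η' : ℝ) (τ : ℝ) => (τ : ℂ) ^ k * (Complex.exp (P.eval ((t : ℂ) + τ)) *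
      (starRingEnd ℂ) (g τ) * Complex.exp (-2 * (π : ℂ) * Complex.I * η' * τ)))
    (F' := fun (η' : ℝ) (τ : ℝ) => (-2 * (π : ℂ) * Complex.I * τ) *
      ((τ : ℂ) ^ k * (Complex.exp (P.eval ((t : ℂ) + τ)) *
      (starRingEnd ℂ) (g τ) * Complex.exp (-2 * (π : ℂ) * Complex.I * η' * τ))))
    (bound := fun τ => (2 * π * Real.exp M) * (|τ| ^ (k + 1) * ‖g τ‖)) (Metric.ball_mem_nhds _ one_pos)
    (Filter.Eventually.of_forall fun η' =>
      ((Complex.continuous_ofReal.pow k).mul (cont_integrand P g η' t)).aestronglyMeasurable)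
    (integrable_integrand P M hM g η t k)
    (((continuous_const.mul Complex.continuous_ofReal).mul
      ((Complex.continuous_ofReal.pow k).mul (cont_integrand P g η t))).aestronglyMeasurable)
    (Filter.Eventually.of_forall fun τ => fun η' hη' => ?_)
    (((integrable_pow_abs_mul g (k + 1)).const_mul (2 * π * Real.exp M)))
    (Filter.Eventually.of_forall fun τ => fun η' hη' => ?_)
  · -- conclude
    have h2 := key.2.differentiableAt
    have hfin : (fun η' : ℝ => ∫ τ : ℝ, (τ : ℂ) ^ k * (Complex.exp (P.eval ((t : ℂ) + τ)) *
        (starRingEnd ℂ) (g τ) * Complex.exp (-2 * (π : ℂ) * Complex.I * η' * τ)))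
        = fun η' : ℝ => STFT (fun τ : ℝ => Complex.exp (P.eval (τ : ℂ)))
            (fun τ : ℝ => (τ : ℂ) ^ k * g τ) t η' := by
      funext η'
      simp only [STFT, Complex.ofReal_add]
      refine integral_congr_ae (Filter.Eventually.of_forall fun τ => ?_)
      simp only [map_mul, map_pow, Complex.conj_ofReal]
      ring
    rwa [hfin] at h2
  · -- bound
    rw [norm_mul, norm_integrand, norm_neg_two_pi_I_tau]
    have h1 : (P.eval ((t : ℂ) + τ)).re ≤ M := by
      have := hM (t + τ); rwa [Complex.ofReal_add] at this
    have h2 := Real.exp_le_exp.2 h1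
    have hg : (0:ℝ) ≤ ‖g τ‖ := norm_nonneg _
    calc 2 * π * |τ| * (|τ| ^ k * (Real.exp ((P.eval ((t : ℂ) + τ)).re) * ‖g τ‖))
        = Real.exp ((P.eval ((t : ℂ) + τ)).re) * (2 * π * (|τ| ^ (k+1) * ‖g τ‖)) := by
          rw [pow_succ]; ring
      _ ≤ Real.exp M * (2 * π * (|τ| ^ (k+1) * ‖g τ‖)) := by
          apply mul_le_mul_of_nonneg_right h2; positivity
      _ = 2 * π * Real.exp M * (|τ| ^ (k+1) * ‖g τ‖) := by ring
  · -- differentiability in η'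
    have hin : HasDerivAt (fun z : ℂ => -2 * (π : ℂ) * Complex.I * z * τ)
        (-2 * (π : ℂ) * Complex.I * τ) (η' : ℂ) := by
      simpa using ((hasDerivAt_id (η' : ℂ)).const_mul (-2 * (π : ℂ) * Complex.I)).mul_const (τ : ℂ)
    have hexp := (hin.cexp).comp_ofReal (z := η')
    have hmul := hexp.const_mul ((τ : ℂ) ^ k * (Complex.exp (P.eval ((t : ℂ) + τ)) *
      (starRingEnd ℂ) (g τ)))
    convert hmul using 1
    · rfl
    · funext η''
      ring
    · ring

lemma STFT_pow_eq (P : Polynomial ℂ) (g : SchwartzMap ℝ ℂ) (t η : ℝ) (k : ℕ) :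
    STFT (fun τ : ℝ => Complex.exp (P.eval (τ : ℂ))) (fun τ : ℝ => (τ : ℂ) ^ k * g τ) t η
    = ∫ τ : ℝ, (τ : ℂ) ^ k * (Complex.exp (P.eval ((t : ℂ) + τ)) * (starRingEnd ℂ) (g τ) *
        Complex.exp (-2 * (π : ℂ) * Complex.I * η * τ)) := by
  simp only [STFT, Complex.ofReal_add]
  refine integral_congr_ae (Filter.Eventually.of_forall fun τ => ?_)
  simp only [map_mul, map_pow, Complex.conj_ofReal]
  ring

lemma deriv_STFT_sum (P : Polynomial ℂ) (M : ℝ) (hM : ∀ τ : ℝ, (P.eval (τ : ℂ)).re ≤ M)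
    (g : SchwartzMap ℝ ℂ) (t η : ℝ) (N : ℕ) (hdeg : P.natDegree ≤ N) (hN : 1 ≤ N) :
    deriv (fun t' : ℝ => STFT (fun τ : ℝ => Complex.exp (P.eval (τ : ℂ))) (⇑g) t' η) t
    = ∑ k ∈ Finset.range N, ((Polynomial.taylor (t : ℂ) (Polynomial.derivative P)).coeff k) *
        STFT (fun τ : ℝ => Complex.exp (P.eval (τ : ℂ))) (fun τ : ℝ => (τ : ℂ) ^ k * g τ) t η := by
  rw [(hasDerivAt_STFT_t P M hM g t η).deriv]
  have hdlt : (Polynomial.derivative P).natDegree < N := by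
    have h1 := Polynomial.natDegree_derivative_le P
    omega
  have hpoly : ∀ τ : ℝ, (Polynomial.derivative P).eval ((t : ℂ) + τ)
      = ∑ k ∈ Finset.range N,
          (Polynomial.taylor (t : ℂ) (Polynomial.derivative P)).coeff k * (τ : ℂ) ^ k := by
    intro τ
    rw [add_comm ((t : ℂ)) ((τ : ℂ)), ← Polynomial.taylor_eval]
    exact Polynomial.eval_eq_sum_range' (by rw [Polynomial.natDegree_taylor]; exact hdlt) _
  calc (∫ τ : ℝ, (Polynomial.derivative P).eval ((t : ℂ) + τ) *
        (Complex.exp (P.eval ((t : ℂ) + τ)) * (starRingEnd ℂ) (g τ) *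
          Complex.exp (-2 * (π : ℂ) * Complex.I * η * τ)))
      = ∫ τ : ℝ, ∑ k ∈ Finset.range N,
          (Polynomial.taylor (t : ℂ) (Polynomial.derivative P)).coeff k *
            ((τ : ℂ) ^ k * (Complex.exp (P.eval ((t : ℂ) + τ)) * (starRingEnd ℂ) (g τ) *
              Complex.exp (-2 * (π : ℂ) * Complex.I * η * τ))) := by
        refine integral_congr_ae (Filter.Eventually.of_forall fun τ => ?_)
        simp only [hpoly τ]
        rw [Finset.sum_mul]
        exact Finset.sum_congr rfl fun k _ => by ring
    _ = ∑ k ∈ Finset.range N, ∫ τ : ℝ,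
          (Polynomial.taylor (t : ℂ) (Polynomial.derivative P)).coeff k *
            ((τ : ℂ) ^ k * (Complex.exp (P.eval ((t : ℂ) + τ)) * (starRingEnd ℂ) (g τ) *
              Complex.exp (-2 * (π : ℂ) * Complex.I * η * τ))) :=
        integral_finset_sum _ fun k _ => (integrable_integrand P M hM g η t k).const_mul _
    _ = ∑ k ∈ Finset.range N,
          (Polynomial.taylor (t : ℂ) (Polynomial.derivative P)).coeff k *
            STFT (fun τ : ℝ => Complex.exp (P.eval (τ : ℂ)))
              (fun τ : ℝ => (τ : ℂ) ^ k * g τ) t η := by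
        refine Finset.sum_congr rfl fun k _ => ?_
        rw [integral_const_mul, STFT_pow_eq]

lemma re_div_two_pi_I (z : ℂ) : (z / (2 * (π : ℂ) * Complex.I)).re = z.im / (2 * π) := by
  rw [Complex.div_re]
  have h1 : (2 * (π : ℂ) * Complex.I).re = 0 := by simp
  have h2 : (2 * (π : ℂ) * Complex.I).im = 2 * π := by simp
  rw [h1, h2, Complex.normSq_apply, h1, h2]
  have hπ : (π : ℝ) ≠ 0 := Real.pi_ne_zero
  field_simp
  ring

end Aux

/-- for `f = exp ∘ P`, `P = log A + 2πi·φ` of degree at most `N ≥ 2` with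
real part bounded above, the `N`-th order complex IF estimate
`ω̃^{[N]}_{η,f}(t,η) = ω̃_f(t,η) − Σ_{k=2}^N q̃^{[k,N]}(η)·x_{k,1}(η)` recovers the
instantaneous frequency exactly: `φ'(t) = Im(P'(t))/(2π) = Re(ω̃^{[N]}_{η,f}(t,η))` on `U`. -/
theorem nth_order_if_estimate_exact (N : ℕ) (hN : 2 ≤ N) (P : Polynomial ℂ)
    (hdeg : P.natDegree ≤ N)
    (hbd : ∃ M : ℝ, ∀ τ : ℝ, (P.eval (τ : ℂ)).re ≤ M)
    (f : ℝ → ℂ) (hf : f = fun τ : ℝ => Complex.exp (P.eval (τ : ℂ)))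
    (g : SchwartzMap ℝ ℂ) (t : ℝ) (U : Set ℝ) (hU : IsOpen U)
    (hVU : ∀ η ∈ U, STFT f (⇑g) t η ≠ 0)
    (x : ℕ → ℕ → ℝ → ℂ) (y : ℕ → ℝ → ℂ) (q : ℕ → ℝ → ℂ)
    -- first level: x_{k,1} and y₁
    (hx1 : ∀ k : ℕ, 1 ≤ k → k ≤ N →
      x 1 k = fun η : ℝ =>
        STFT f (fun τ : ℝ => (τ : ℂ) ^ (k - 1) * g τ) t η / STFT f (⇑g) t η)
    (hy1 : y 1 = fun η : ℝ => deriv (fun t' : ℝ => STFT f (⇑g) t' η) t /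
      (2 * (π : ℂ) * Complex.I * STFT f (⇑g) t η))
    -- recursive levels: nonvanishing denominators and defining quotients on U
    (hne : ∀ j : ℕ, 2 ≤ j → j ≤ N → ∀ η ∈ U, deriv (x (j - 1) j) η ≠ 0)
    (hxrec : ∀ j : ℕ, 2 ≤ j → j ≤ N → ∀ k : ℕ, j ≤ k → k ≤ N → ∀ η ∈ U,
      x j k η = deriv (x (j - 1) k) η / deriv (x (j - 1) j) η)
    (hyrec : ∀ j : ℕ, 2 ≤ j → j ≤ N → ∀ η ∈ U,
      y j η = deriv (y (j - 1)) η / deriv (x (j - 1) j) η)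
    -- the quotients are differentiable on U
    (hxdiff : ∀ j : ℕ, 2 ≤ j → j ≤ N → ∀ k : ℕ, j ≤ k → k ≤ N → ∀ η ∈ U,
      DifferentiableAt ℝ (x j k) η)
    (hydiff : ∀ j : ℕ, 2 ≤ j → j ≤ N → ∀ η ∈ U, DifferentiableAt ℝ (y j) η)
    -- backward substitution defining q̃^{[j,N]}
    (hqN : ∀ η ∈ U, q N η = y N η)
    (hqrec : ∀ j : ℕ, 2 ≤ j → j < N → ∀ η ∈ U,
      q j η = y j η - ∑ k ∈ Finset.Icc (j + 1) N, x j k η * q k η) :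
    ∀ η ∈ U,
      ((Polynomial.derivative P).eval (t : ℂ)).im / (2 * π)
        = (y 1 η - ∑ k ∈ Finset.Icc 2 N, q k η * x 1 k η).re := by
  obtain ⟨M, hM⟩ := hbd
  subst hf
  set a : ℕ → ℂ := fun k =>
    ((Polynomial.taylor (t : ℂ) (Polynomial.derivative P)).coeff (k - 1)) /
      (2 * (π : ℂ) * Complex.I) with ha
  have hg0 : (fun τ : ℝ => (τ : ℂ) ^ 0 * g τ) = ⇑g := funext fun τ => by
    rw [pow_zero, one_mul]
  have hWdiff : ∀ η' : ℝ, DifferentiableAt ℝ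
      (fun η'' : ℝ => STFT (fun τ : ℝ => Complex.exp (P.eval (τ : ℂ))) (⇑g) t η'') η' := by
    intro η'
    have := differentiableAt_STFT_eta P M hM g t 0 η'
    rwa [hg0] at this
  have hx1e : ∀ k : ℕ, 1 ≤ k → k ≤ N → ∀ η ∈ U, DifferentiableAt ℝ (x 1 k) η := by
    intro k h1 h2 η hη
    rw [hx1 k h1 h2]
    exact (differentiableAt_STFT_eta P M hM g t (k - 1) η).div (hWdiff η) (hVU η hη)
  have hxdiff' : ∀ j : ℕ, 1 ≤ j → j ≤ N → ∀ k : ℕ, j ≤ k → k ≤ N → ∀ η ∈ U,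
      DifferentiableAt ℝ (x j k) η := by
    intro j h1 h2 k hk1 hk2 η hη
    rcases Nat.lt_or_ge j 2 with h | h
    · have hj : j = 1 := by omega
      subst hj
      exact hx1e k hk1 hk2 η hη
    · exact hxdiff j h h2 k hk1 hk2 η hη
  have hxjj : ∀ j : ℕ, 1 ≤ j → j ≤ N → ∀ η ∈ U, x j j η = 1 := by
    intro j h1 h2 η hη
    rcases Nat.lt_or_ge j 2 with h | h
    · have hj : j = 1 := by omega
      subst hj
      simp only [hx1 1 le_rfl h2]
      have h0 : (fun τ : ℝ => (τ : ℂ) ^ (1 - 1) * g τ) = ⇑g := by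
        funext τ; norm_num
      rw [h0]
      exact div_self (hVU η hη)
    · rw [hxrec j h h2 j le_rfl h2 η hη]
      exact div_self (hne j h h2 η hη)
  have hy1sum : ∀ η ∈ U, y 1 η = ∑ k ∈ Finset.Icc 1 N, a k * x 1 k η := by
    intro η hη
    have hds := deriv_STFT_sum P M hM g t η N hdeg (by omega)
    simp only [hy1, hds, Finset.sum_div]
    have himg : Finset.Icc 1 N = Finset.image (· + 1) (Finset.range N) := by
      ext m
      simp only [Finset.mem_Icc, Finset.mem_image, Finset.mem_range]
      constructor
      · rintro ⟨hm1, hm2⟩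
        exact ⟨m - 1, by omega, by omega⟩
      · rintro ⟨b, hb, rfl⟩
        omega
    rw [himg, Finset.sum_image (fun b _ c _ h => by omega)]
    refine Finset.sum_congr rfl fun k hk => ?_
    rw [Finset.mem_range] at hk
    simp only [hx1 (k + 1) (by omega) (by omega), ha, Nat.add_sub_cancel]
    rw [div_mul_div_comm]
  have main : ∀ j : ℕ, 1 ≤ j → j ≤ N → ∀ η ∈ U,
      y j η = ∑ k ∈ Finset.Icc j N, a k * x j k η := by
    intro j
    induction j with
    | zero => omega
    | succ n ih =>
      intro _ h2 η hη
      rcases Nat.eq_zero_or_pos n with hn0 | hn1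
      · subst hn0
        exact hy1sum η hη
      · have h2n : 2 ≤ n + 1 := by omega
        have hnN : n ≤ N := by omega
        rw [hyrec (n + 1) h2n h2 η hη]
        simp only [Nat.add_sub_cancel]
        have hsplit : ∀ η' ∈ U, y n η' =
            a n + ∑ k ∈ Finset.Icc (n + 1) N, a k * x n k η' := by
          intro η' hη'
          rw [ih hn1 hnN η' hη']
          have hins : Finset.Icc n N = insert n (Finset.Icc (n + 1) N) := by
            ext m
            simp only [Finset.mem_Icc, Finset.mem_insert]
            omega
          rw [hins, Finset.sum_insert (by simp [Finset.mem_Icc])]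
          rw [hxjj n hn1 hnN η' hη', mul_one]
        have hev : y n =ᶠ[nhds η]
            fun η' => a n + ∑ k ∈ Finset.Icc (n + 1) N, a k * x n k η' :=
          Filter.eventuallyEq_of_mem (hU.mem_nhds hη) hsplit
        rw [hev.deriv_eq]
        have hdk : ∀ k ∈ Finset.Icc (n + 1) N,
            DifferentiableAt ℝ (fun η' => a k * x n k η') η := by
          intro k hk
          rw [Finset.mem_Icc] at hk
          exact (hxdiff' n hn1 hnN k (by omega) hk.2 η hη).const_mul (a k)
        rw [deriv_const_add, deriv_fun_sum hdk]
        have hd2 : ∀ k ∈ Finset.Icc (n + 1) N,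
            deriv (fun η' => a k * x n k η') η = a k * deriv (x n k) η := by
          intro k hk
          rw [Finset.mem_Icc] at hk
          exact deriv_const_mul (a k) (hxdiff' n hn1 hnN k (by omega) hk.2 η hη)
        rw [Finset.sum_congr rfl hd2, Finset.sum_div]
        refine Finset.sum_congr rfl fun k hk => ?_
        rw [Finset.mem_Icc] at hk
        rw [hxrec (n + 1) h2n h2 k hk.1 hk.2 η hη]
        simp only [Nat.add_sub_cancel]
        rw [mul_div_assoc]
  have hback : ∀ m : ℕ, ∀ j : ℕ, 2 ≤ j → j ≤ N → N - j ≤ m → ∀ η ∈ U, q j η = a j := by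
    intro m
    induction m with
    | zero =>
      intro j h2 hjN hm η hη
      have hjN' : j = N := by omega
      subst hjN'
      rw [hqN η hη, main j (by omega) le_rfl η hη, Finset.Icc_self, Finset.sum_singleton,
        hxjj j (by omega) le_rfl η hη, mul_one]
    | succ m ih =>
      intro j h2 hjN hm η hη
      rcases eq_or_lt_of_le hjN with hEq | hlt
      · exact ih j h2 hjN (by omega) η hη
      · rw [hqrec j h2 hlt η hη, main j (by omega) hjN η hη]
        have hins : Finset.Icc j N = insert j (Finset.Icc (j + 1) N) := by
          ext m'
          simp only [Finset.mem_Icc, Finset.mem_insert]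
          omega
        rw [hins, Finset.sum_insert (by simp [Finset.mem_Icc]),
          hxjj j (by omega) hjN η hη, mul_one]
        have hq' : ∀ k ∈ Finset.Icc (j + 1) N, x j k η * q k η = a k * x j k η := by
          intro k hk
          rw [Finset.mem_Icc] at hk
          rw [ih k (by omega) hk.2 (by omega) η hη, mul_comm]
        rw [Finset.sum_congr rfl hq']
        ring
  intro η hη
  have h1 : y 1 η - ∑ k ∈ Finset.Icc 2 N, q k η * x 1 k η = a 1 := by
    rw [hy1sum η hη]
    have hins : Finset.Icc 1 N = insert 1 (Finset.Icc 2 N) := by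
      ext m
      simp only [Finset.mem_Icc, Finset.mem_insert]
      omega
    rw [hins, Finset.sum_insert (by simp [Finset.mem_Icc]),
      hxjj 1 le_rfl (by omega) η hη, mul_one]
    have hq' : ∀ k ∈ Finset.Icc 2 N, q k η * x 1 k η = a k * x 1 k η := by
      intro k hk
      rw [Finset.mem_Icc] at hk
      rw [hback (N - 2) k hk.1 hk.2 (by omega) η hη]
    rw [Finset.sum_congr rfl hq']
    ring
  rw [h1]
  simp only [ha, Nat.sub_self]
  rw [Polynomial.taylor_coeff_zero, re_div_two_pi_I]
end

section
/- Let f ∈ L¹(ℝ, ℂ), let g : ℝ → ℂ be a Schwartz function, and fix k ≥ 2 and (t,η) such that V_f^g(t,η) ≠ 0 and V_f^g(t,η)·V_f^{t²g}(t,η) − (V_f^{tg}(t,η))² ≠ 0. Setting x_{k,1}(η) = V_f^{t^{k−1}g}(t,η)/V_f^g(t,η), one has ∂_η x_{2,1}(η) ≠ 0 and x_{k,2}(t,η) := ∂_η x_{k,1}(η)/∂_η x_{2,1}(η) = [ V_f^g·V_f^{t^k g} − V_f^{tg}·V_f^{t^{k−1}g} ] / [ V_f^g·V_f^{t²g} −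 (V_f^{tg})² ], all STFTs evaluated at (t,η). -/
open MeasureTheory Real

lemma window_bound (g : SchwartzMap ℝ ℂ) (j : ℕ) :
    ∃ C : ℝ, ∀ τ : ℝ, ‖(τ : ℂ) ^ j * g τ‖ ≤ C := by
  obtain ⟨C, hC⟩ := g.decay j 0
  refine ⟨C, fun τ => ?_⟩
  have := hC.2 τ
  rw [norm_iteratedFDeriv_zero] at this
  calc ‖(τ : ℂ) ^ j * g τ‖ = ‖τ‖ ^ j * ‖g τ‖ := by
        rw [norm_mul, norm_pow, Complex.norm_real]
    _ ≤ C := this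

lemma hasDerivAt_STFT (f : ℝ → ℂ) (hf : Integrable f) (w : ℝ → ℂ) (hw : Continuous w)
    (C C' : ℝ) (hC : ∀ τ, ‖w τ‖ ≤ C) (hC' : ∀ τ : ℝ, ‖(τ : ℂ) * w τ‖ ≤ C') (t η : ℝ) :
    HasDerivAt (fun η' => STFT f w t η')
      ((-2 * (π : ℂ) * Complex.I) * STFT f (fun τ : ℝ => (τ : ℂ) * w τ) t η) η := by
  have hft : Integrable (fun τ => f (t + τ)) := hf.comp_add_left t
  set F : ℝ → ℝ → ℂ := fun η' τ => f (t + τ) * (starRingEnd ℂ) (w τ) *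
    Complex.exp (-2 * (π : ℂ) * Complex.I * (η' : ℂ) * (τ : ℂ)) with hF
  set F' : ℝ → ℝ → ℂ := fun η' τ => (-2 * (π : ℂ) * Complex.I) *
    (f (t + τ) * (starRingEnd ℂ) ((τ : ℂ) * w τ) *
      Complex.exp (-2 * (π : ℂ) * Complex.I * (η' : ℂ) * (τ : ℂ))) with hF'
  have hexp_norm : ∀ a b : ℝ,
      ‖Complex.exp (-2 * (π : ℂ) * Complex.I * (a : ℂ) * (b : ℂ))‖ = 1 := by
    intro a b
    rw [Complex.norm_exp]
    have h0 : (-2 * (π : ℂ) * Complex.I * (a : ℂ) * (b : ℂ)).re = 0 := by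
      simp [Complex.mul_re, Complex.mul_im]
    rw [h0, Real.exp_zero]
  have hnorm2pi : ‖(-2 : ℂ) * (π : ℂ) * Complex.I‖ = 2 * π := by
    simp [norm_mul, Complex.norm_real, abs_of_nonneg pi_pos.le]
  have hmeas : ∀ η' : ℝ, AEStronglyMeasurable (F η') volume := by
    intro η'
    exact (hft.aestronglyMeasurable.mul
      ((Complex.continuous_conj.comp hw).aestronglyMeasurable)).mul
      ((Complex.continuous_exp.comp (by fun_prop)).aestronglyMeasurable)
  have hmeas' : AEStronglyMeasurable (F' η) volume := by
    apply AEStronglyMeasurable.const_mul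
    exact (hft.aestronglyMeasurable.mul
      ((Complex.continuous_conj.comp (by fun_prop)).aestronglyMeasurable)).mul
      ((Complex.continuous_exp.comp (by fun_prop)).aestronglyMeasurable)
  have key := hasDerivAt_integral_of_dominated_loc_of_deriv_le (F := F) (F' := F')
    (x₀ := η) (bound := fun τ => 2 * π * (C' * ‖f (t + τ)‖)) (μ := volume) (Metric.ball_mem_nhds η one_pos)
    (Filter.Eventually.of_forall hmeas)
    (by
      apply Integrable.mono' (hft.norm.const_mul C) (hmeas η)
      filter_upwards with τ
      simp only [hF, norm_mul, hexp_norm, mul_one, RCLike.norm_conj]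
      calc ‖f (t + τ)‖ * ‖w τ‖ ≤ ‖f (t + τ)‖ * C :=
            mul_le_mul_of_nonneg_left (hC τ) (norm_nonneg _)
        _ = C * ‖f (t + τ)‖ := by ring)
    hmeas'
    (by
      filter_upwards with τ η' _
      simp only [hF', norm_mul, hexp_norm, mul_one, hnorm2pi, RCLike.norm_conj]
      calc 2 * π * (‖f (t + τ)‖ * (‖(τ : ℂ)‖ * ‖w τ‖))
          ≤ 2 * π * (‖f (t + τ)‖ * C') := by
            apply mul_le_mul_of_nonneg_left
            · apply mul_le_mul_of_nonneg_left _ (norm_nonneg _)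
              rw [← norm_mul]; exact hC' τ
            · positivity
        _ = 2 * π * (C' * ‖f (t + τ)‖) := by ring)
    ((hft.norm.const_mul C').const_mul (2 * π))
    (by
      filter_upwards with τ η' _
      have h1 := ((((hasDerivAt_id ((η' : ℝ) : ℂ)).const_mul
        (-2 * (π : ℂ) * Complex.I * (τ : ℂ))).cexp).comp_ofReal).const_mul
        (f (t + τ) * (starRingEnd ℂ) (w τ))
      simp only [id_eq, mul_one] at h1
      have heqF : (F · τ) = fun s : ℝ =>
          (f (t + τ) * (starRingEnd ℂ) (w τ)) *
            Complex.exp ((-2 * (π : ℂ) * Complex.I * (τ : ℂ)) * (s : ℂ)) := by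
        funext s
        simp only [hF]
        rw [show (-2 * (π : ℂ) * Complex.I * (s : ℂ) * (τ : ℂ)) =
          (-2 * (π : ℂ) * Complex.I * (τ : ℂ)) * (s : ℂ) by ring, mul_assoc]
      rw [heqF]
      convert h1 using 1
      · rfl
      simp only [hF', map_mul, Complex.conj_ofReal]
      rw [show (-2 * (π : ℂ) * Complex.I * (η' : ℂ) * (τ : ℂ)) =
        (-2 * (π : ℂ) * Complex.I * (τ : ℂ)) * (η' : ℂ) by ring]
      ring)
  have h2 := key.2
  have heq : (∫ τ : ℝ, F' η τ) =
      (-2 * (π : ℂ) * Complex.I) * STFT f (fun τ : ℝ => (τ : ℂ) * w τ) t η := by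
    rw [hF', STFT, integral_const_mul]
  rw [heq] at h2
  exact h2

/-- with `x_{k,1}(η) = V_f^{t^{k−1}g}(t,η)/V_f^g(t,η)`, one has
`∂_η x_{2,1}(η) ≠ 0` and `x_{k,2} = ∂_η x_{k,1}/∂_η x_{2,1}
= [V_f^g·V_f^{t^k g} − V_f^{tg}·V_f^{t^{k−1}g}] / [V_f^g·V_f^{t²g} − (V_f^{tg})²]`. -/
theorem x_k_2_closed_form (f : ℝ → ℂ) (hf : Integrable f) (g : SchwartzMap ℝ ℂ)
    (k : ℕ) (hk : 2 ≤ k) (t η : ℝ) (hV : STFT f (⇑g) t η ≠ 0)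
    (hD : STFT f (⇑g) t η * STFT f (fun τ : ℝ => (τ : ℂ) ^ 2 * g τ) t η
        - (STFT f (fun τ : ℝ => (τ : ℂ) * g τ) t η) ^ 2 ≠ 0)
    (x : ℕ → ℝ → ℂ)
    (hx : ∀ m : ℕ, x m = fun η' : ℝ =>
      STFT f (fun τ : ℝ => (τ : ℂ) ^ (m - 1) * g τ) t η' / STFT f (⇑g) t η') :
    deriv (x 2) η ≠ 0 ∧
    deriv (x k) η / deriv (x 2) η
      = (STFT f (⇑g) t η * STFT f (fun τ : ℝ => (τ : ℂ) ^ k * g τ) t η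
          - STFT f (fun τ : ℝ => (τ : ℂ) * g τ) t η *
              STFT f (fun τ : ℝ => (τ : ℂ) ^ (k - 1) * g τ) t η) /
        (STFT f (⇑g) t η * STFT f (fun τ : ℝ => (τ : ℂ) ^ 2 * g τ) t η
          - (STFT f (fun τ : ℝ => (τ : ℂ) * g τ) t η) ^ 2) := by
  set c : ℂ := -2 * (π : ℂ) * Complex.I with hc
  have hc0 : c ≠ 0 := by
    rw [hc]
    simp [Complex.ext_iff, pi_ne_zero, Complex.I_ne_zero]
  have hderj : ∀ j : ℕ, HasDerivAt (fun η' => STFT f (fun τ : ℝ => (τ : ℂ) ^ j * g τ) t η')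
      (c * STFT f (fun τ : ℝ => (τ : ℂ) ^ (j + 1) * g τ) t η) η := by
    intro j
    obtain ⟨C, hC⟩ := window_bound g j
    obtain ⟨C', hC'⟩ := window_bound g (j + 1)
    have hwin : (fun τ : ℝ => (τ : ℂ) * ((τ : ℂ) ^ j * g τ)) =
        fun τ : ℝ => (τ : ℂ) ^ (j + 1) * g τ := by
      funext τ; ring
    have h := hasDerivAt_STFT f hf (fun τ : ℝ => (τ : ℂ) ^ j * g τ)
      (by fun_prop) C C' hC
      (fun τ => by
        rw [show ((τ : ℂ) * ((τ : ℂ) ^ j * g τ)) = (τ : ℂ) ^ (j + 1) * g τ by ring]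
        exact hC' τ) t η
    rwa [hwin] at h
  have hder0 : HasDerivAt (fun η' => STFT f (⇑g) t η')
      (c * STFT f (fun τ : ℝ => (τ : ℂ) * g τ) t η) η := by
    obtain ⟨C, hC⟩ := window_bound g 0
    obtain ⟨C', hC'⟩ := window_bound g 1
    exact hasDerivAt_STFT f hf (⇑g) g.continuous C C'
      (fun τ => by simpa using hC τ) (fun τ => by simpa using hC' τ) t η
  set V0 := STFT f (⇑g) t η
  set V1 := STFT f (fun τ : ℝ => (τ : ℂ) * g τ) t η with hV1
  have hV1' : STFT f (fun τ : ℝ => (τ : ℂ) ^ 1 * g τ) t η = V1 := by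
    rw [hV1]; congr 1; funext τ; rw [pow_one]
  have hderx : ∀ m : ℕ, 1 ≤ m → deriv (x m) η =
      (c * STFT f (fun τ : ℝ => (τ : ℂ) ^ m * g τ) t η * V0
        - STFT f (fun τ : ℝ => (τ : ℂ) ^ (m - 1) * g τ) t η * (c * V1)) / V0 ^ 2 := by
    intro m hm
    have hm1 : m - 1 + 1 = m := Nat.succ_pred_eq_of_pos hm
    have hN := hderj (m - 1)
    rw [hm1] at hN
    have hdiv := hN.div hder0 hV
    rw [hx m]
    exact hdiv.deriv
  have hd2 := hderx 2 (by norm_num)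
  have hdk := hderx k (by omega)
  rw [hV1'] at hd2
  set V2 := STFT f (fun τ : ℝ => (τ : ℂ) ^ 2 * g τ) t η
  set Vk := STFT f (fun τ : ℝ => (τ : ℂ) ^ k * g τ) t η
  set Vk1 := STFT f (fun τ : ℝ => (τ : ℂ) ^ (k - 1) * g τ) t η
  have hd2' : deriv (x 2) η = c * (V0 * V2 - V1 ^ 2) / V0 ^ 2 := by
    rw [hd2]; ring
  have hne : deriv (x 2) η ≠ 0 := by
    rw [hd2']
    exact div_ne_zero (mul_ne_zero hc0 hD) (pow_ne_zero 2 hV)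
  refine ⟨hne, ?_⟩
  rw [hdk, hd2']
  field_simp
end

section
/- Let f ∈ L¹(ℝ, ℂ), let g : ℝ → ℂ be a Schwartz function, and for integers 1 ≤ j ≤ k define X_{k,j}(t,η) = V_f^g(t,η)·V_f^{t^k g}(t,η) − V_f^{t^{j−1}g}(t,η)·V_f^{t^{k−j+1}g}(t,η). Then for every fixed t, the function η ↦ X_{k,j}(t,η) is differentiable at every η with ∂_η X_{k,j}(t,η) = −2πi · ( X_{k+1,j}(t,η) + X_{k+1,j+1}(t,η) − X_{k+1,2}(t,η) ). -/
open MeasureTheory Real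

open scoped FourierTransform

lemma integrable_w (f : ℝ → ℂ) (hf : Integrable f) (g : SchwartzMap ℝ ℂ) (m : ℕ) (t : ℝ) :
    Integrable (fun τ : ℝ => f (t + τ) * (starRingEnd ℂ) ((τ : ℂ) ^ m * g τ)) := by
  obtain ⟨C, hC⟩ := g.decay m 0
  have hft : Integrable (fun τ : ℝ => f (t + τ)) := hf.comp_add_left t
  have hmeas : AEStronglyMeasurable (fun τ : ℝ => (starRingEnd ℂ) ((τ : ℂ) ^ m * g τ)) volume :=
    (Complex.continuous_conj.comp ((Complex.continuous_ofReal.pow m).mul g.continuous)).aestronglyMeasurable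
  have := hft.bdd_mul hmeas (c := C) (Filter.Eventually.of_forall fun τ => by
    have := hC.2 τ
    simp only [norm_iteratedFDeriv_zero] at this
    calc ‖(starRingEnd ℂ) ((τ : ℂ) ^ m * g τ)‖ = ‖τ‖ ^ m * ‖g τ‖ := by
          simp [norm_mul, norm_pow]
      _ ≤ C := this)
  exact this.congr (Filter.Eventually.of_forall fun τ => mul_comm _ _)

lemma stft_eq_fourier (f : ℝ → ℂ) (g : ℝ → ℂ) (t : ℝ) :
    STFT f g t = 𝓕 (fun τ : ℝ => f (t + τ) * (starRingEnd ℂ) (g τ)) := by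
  funext η
  rw [Real.fourier_eq']
  unfold STFT
  congr 1
  funext τ
  rw [smul_eq_mul]
  simp only [RCLike.inner_apply, conj_trivial]
  push_cast
  ring_nf

lemma smul_w (f : ℝ → ℂ) (g : SchwartzMap ℝ ℂ) (m : ℕ) (t : ℝ) :
    (fun τ : ℝ => (τ : ℝ) • (f (t + τ) * (starRingEnd ℂ) ((τ : ℂ) ^ m * g τ)))
      = fun τ : ℝ => f (t + τ) * (starRingEnd ℂ) ((τ : ℂ) ^ (m + 1) * g τ) := by
  funext τ
  simp only [Complex.real_smul, map_mul, map_pow, Complex.conj_ofReal, pow_succ]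
  ring

lemma stft_hasDerivAt (f : ℝ → ℂ) (hf : Integrable f) (g : SchwartzMap ℝ ℂ) (m : ℕ) (t η : ℝ) :
    HasDerivAt (fun η' : ℝ => STFT f (fun τ : ℝ => (τ : ℂ) ^ m * g τ) t η')
      (-2 * (π : ℂ) * Complex.I * STFT f (fun τ : ℝ => (τ : ℂ) ^ (m + 1) * g τ) t η) η := by
  have hw : Integrable (fun τ : ℝ => f (t + τ) * (starRingEnd ℂ) ((τ : ℂ) ^ m * g τ)) :=
    integrable_w f hf g m t
  have hw' : Integrable (fun τ : ℝ => (τ : ℝ) •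
      (f (t + τ) * (starRingEnd ℂ) ((τ : ℂ) ^ m * g τ))) := by
    rw [smul_w]; exact integrable_w f hf g (m + 1) t
  have h := Real.hasDerivAt_fourier hw hw' η
  rw [show STFT f (fun τ : ℝ => (τ : ℂ) ^ m * g τ) t
      = 𝓕 (fun τ : ℝ => f (t + τ) * (starRingEnd ℂ) ((τ : ℂ) ^ m * g τ)) from
    stft_eq_fourier f _ t]
  convert h using 1
  case e'_4 => rfl
  rw [show STFT f (fun τ : ℝ => (τ : ℂ) ^ (m + 1) * g τ) t
      = 𝓕 (fun τ : ℝ => f (t + τ) * (starRingEnd ℂ) ((τ : ℂ) ^ (m + 1) * g τ)) from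
    stft_eq_fourier f _ t]
  rw [← smul_w f g m t]
  have : (fun x : ℝ => (-2 * (π : ℂ) * Complex.I * x) •
        (f (t + x) * (starRingEnd ℂ) ((x : ℂ) ^ m * g x)))
      = fun x : ℝ => (-2 * (π : ℂ) * Complex.I) •
        ((x : ℝ) • (f (t + x) * (starRingEnd ℂ) ((x : ℂ) ^ m * g x))) := by
    funext x
    simp only [Complex.real_smul, smul_eq_mul]
    ring
  rw [this, Real.fourier_eq', Real.fourier_eq', ← smul_eq_mul,
    ← integral_smul]
  congr 1
  funext v
  simp only [smul_eq_mul]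
  ring

/-- with `X_{k,j}(t,η) = V_f^g·V_f^{t^k g} − V_f^{t^{j−1}g}·V_f^{t^{k−j+1}g}`,
`η ↦ X_{k,j}(t,η)` is differentiable with
`∂_η X_{k,j} = −2πi·(X_{k+1,j} + X_{k+1,j+1} − X_{k+1,2})`. -/
theorem X_deriv_eta (f : ℝ → ℂ) (hf : Integrable f) (g : SchwartzMap ℝ ℂ)
    (X : ℕ → ℕ → ℝ → ℝ → ℂ)
    (hX : ∀ (k j : ℕ) (t η : ℝ),
      X k j t η = STFT f (⇑g) t η * STFT f (fun τ : ℝ => (τ : ℂ) ^ k * g τ) t η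
        - STFT f (fun τ : ℝ => (τ : ℂ) ^ (j - 1) * g τ) t η *
            STFT f (fun τ : ℝ => (τ : ℂ) ^ (k - j + 1) * g τ) t η)
    (k j : ℕ) (hj : 1 ≤ j) (hjk : j ≤ k) (t : ℝ) :
    ∀ η : ℝ,
      HasDerivAt (fun η' : ℝ => X k j t η')
        (-2 * (π : ℂ) * Complex.I *
          (X (k + 1) j t η + X (k + 1) (j + 1) t η - X (k + 1) 2 t η)) η := by
  intro η
  have hg : (fun τ : ℝ => (τ : ℂ) ^ (0 : ℕ) * g τ) = ⇑g := by funext τ; simp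
  have D : ∀ m : ℕ, HasDerivAt (fun η' : ℝ => STFT f (fun τ : ℝ => (τ : ℂ) ^ m * g τ) t η')
      (-2 * (π : ℂ) * Complex.I * STFT f (fun τ : ℝ => (τ : ℂ) ^ (m + 1) * g τ) t η) η :=
    fun m => stft_hasDerivAt f hf g m t η
  have D0 : HasDerivAt (fun η' : ℝ => STFT f (⇑g) t η')
      (-2 * (π : ℂ) * Complex.I * STFT f (fun τ : ℝ => (τ : ℂ) ^ (0 + 1) * g τ) t η) η := by
    have := D 0
    rwa [hg] at this
  have e1 : j - 1 + 1 = j := by omega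
  have e2 : k + 1 - j + 1 = k - j + 1 + 1 := by omega
  have e3 : j + 1 - 1 = j := by omega
  have e4 : k + 1 - (j + 1) + 1 = k - j + 1 := by omega
  have e5 : (2 : ℕ) - 1 = 0 + 1 := by omega
  have e6 : k + 1 - 2 + 1 = k := by omega
  simp only [hX]
  have H := (D0.mul (D k)).sub ((D (j - 1)).mul (D (k - j + 1)))
  convert H using 1
  case e'_4 => rfl
  case e'_8 => rfl
  rw [e1, e2, e3, e4, e5, e6]
  rw [show STFT f (⇑g) t = fun η' => STFT f (⇑g) t η' from rfl]
  ring
end
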